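/- A *-ring R with unity is a generalized p.q.-Baer *-ring if and only if for every x ∈ R there exist a central projection e and n ∈ ℕ such that r((xR)^n) = r((eR)^n). -/
import Mathlib


variable {R : Type*} [Ring R] [StarRing R]

/-- A projection in a `*`-ring: a self-adjoint idempotent. -/
def IsProj (e : R) : Prop := e * e = e ∧ star e = e

/-- A central element. -/
def IsCentral (e : R) : Prop := ∀ r : R, e * r = r * e

/-- The order on projections: `e ≤ f` iff `e = e * f`. -/
def projLE (e f : R) : Prop := e * f = e

/-- `chain x n f = (x * f 0) * (x * f 1) * ⋯ * (x * f n)`, a typical generator of `(xR)^(n+1)`. -/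
def chain (x : R) : ℕ → (ℕ → R) → R
  | 0, f => x * f 0
  | n + 1, f => chain x n f * (x * f (n + 1))

/-- The right annihilator of `(xR)^(n+1)`. -/
def rAnnPow (x : R) (n : ℕ) : Set R := {a : R | ∀ f : ℕ → R, chain x n f * a = 0}

/-- The right annihilator of `xR`. -/
def rAnnP (x : R) : Set R := rAnnPow x 0

/-- The right ideal `eR`. -/
def rIdeal (e : R) : Set R := {y : R | ∃ r : R, y = e * r}

/-- A p.q.-Baer `*`-ring: the right annihilator of every principal ideal is generated by a
projection. -/
def IsPQBaerStar (S : Type*) [Ring S] [StarRing S] : Prop :=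
  ∀ x : S, ∃ e : S, IsProj e ∧ rAnnP x = rIdeal e

/-- A generalized p.q.-Baer `*`-ring: for every `x` there are `n ≥ 1` and a projection `e`
with `r((xR)^n) = eR`. -/
def IsGenPQBaerStar (S : Type*) [Ring S] [StarRing S] : Prop :=
  ∀ x : S, ∃ (n : ℕ) (e : S), IsProj e ∧ rAnnPow x n = rIdeal e

/-- `h` is the central cover of `x`: the smallest central projection with `h * x = x`. -/
def IsCentralCover (x h : R) : Prop :=
  IsProj h ∧ IsCentral h ∧ h * x = x ∧
    ∀ k : R, IsProj k → IsCentral k → k * x = x → projLE h k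

/-- `e` is the generalized central cover of `x`: the smallest central projection with
`x ^ n * e = x ^ n` for some `n ≥ 1`. -/
def IsGenCentralCover (x e : R) : Prop :=
  IsProj e ∧ IsCentral e ∧ (∃ n : ℕ, x ^ (n + 1) * e = x ^ (n + 1)) ∧
    ∀ k : R, IsProj k → IsCentral k → (∃ n : ℕ, x ^ (n + 1) * k = x ^ (n + 1)) → projLE e k

/-- Murray–von Neumann style equivalence of projections. -/
def ProjEquiv (p q : R) : Prop := ∃ w : R, star w * w = p ∧ w * star w = q


lemma chain_congr (x : R) (n : ℕ) {f g : ℕ → R} (h : ∀ i ≤ n, f i = g i) :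
    chain x n f = chain x n g := by
  induction n with
  | zero => simp [chain, h 0 le_rfl]
  | succ n ih =>
    simp only [chain]
    rw [ih (fun i hi => h i (hi.trans (Nat.le_succ n))), h (n+1) le_rfl]

lemma chain_mul_right (x : R) (n : ℕ) (f : ℕ → R) (s : R) :
    chain x n f * s = chain x n (Function.update f n (f n * s)) := by
  induction n with
  | zero => simp [chain, mul_assoc]
  | succ n ih =>
    simp only [chain, Function.update_self]
    rw [chain_congr x n (f := Function.update f (n+1) (f (n+1) * s)) (g := f)
      (fun i hi => Function.update_of_ne (by omega) _ _), mul_assoc, mul_assoc]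

/-- `rAnnPow x n` is closed under left multiplication. -/
lemma rAnnPow_smul {x a : R} (n : ℕ) (ha : a ∈ rAnnPow x n) (s : R) :
    s * a ∈ rAnnPow x n := by
  intro f
  rw [← mul_assoc, chain_mul_right]
  exact ha _

lemma central_of_rIdeal {x e : R} (n : ℕ) (he : IsProj e)
    (h : rAnnPow x n = rIdeal e) : IsCentral e := by
  have hee : e ∈ rAnnPow x n := h ▸ ⟨1, (mul_one e).symm⟩
  -- ere = re for all r
  have h1 : ∀ r : R, e * (r * e) = r * e := by
    intro r
    obtain ⟨s, hs⟩ := h ▸ rAnnPow_smul n hee r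
    rw [hs, ← mul_assoc, he.1]
  -- apply star to get e*r*e = e*r
  have h2 : ∀ r : R, e * r * e = e * r := by
    intro r
    have := congrArg star (h1 (star r))
    simpa [star_mul, he.2, mul_assoc] using this
  intro r
  rw [← h2 r, mul_assoc, h1 r]

lemma chain_central {c : R} (hc : IsCentral c) (hcc : c * c = c) (n : ℕ) (f : ℕ → R) :
    chain c n f * c = chain c n f := by
  induction n with
  | zero => simp only [chain]; rw [mul_assoc, ← hc (f 0), ← mul_assoc, hcc]
  | succ n ih =>
    simp only [chain]
    rw [mul_assoc, mul_assoc, ← hc (f (n+1)), ← mul_assoc c, hcc]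

lemma rAnnPow_central {c : R} (hc : IsCentral c) (hcc : c * c = c) (n : ℕ) :
    rAnnPow c n = {a : R | c * a = 0} := by
  have h1 : chain c n (fun _ => 1) = c := by
    induction n with
    | zero => simp [chain]
    | succ n ih => simp only [chain] at *; rw [ih, mul_one, hcc]
  ext a
  constructor
  · intro ha
    have := ha (fun _ => 1)
    rwa [h1] at this
  · intro ha f
    calc chain c n f * a = chain c n f * c * a := by rw [chain_central hc hcc]
    _ = chain c n f * (c * a) := by rw [mul_assoc]
    _ = 0 := by rw [ha, mul_zero]

lemma rIdeal_central {e : R} (hc : IsCentral e) (hcc : e * e = e) :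
    rIdeal e = {a : R | (1 - e) * a = 0} := by
  ext a
  constructor
  · rintro ⟨r, rfl⟩
    show (1 - e) * (e * r) = 0
    rw [sub_mul, one_mul, ← mul_assoc, hcc, sub_self]
  · intro ha
    refine ⟨a, ?_⟩
    have h2 : a - e * a = 0 := by
      have := ha
      simp only [Set.mem_setOf_eq, sub_mul, one_mul] at this
      exact this
    rw [sub_eq_zero] at h2
    exact h2

lemma isProj_one_sub {e : R} (he : IsProj e) (hc : IsCentral e) : IsProj (1 - e) := by
  constructor
  · rw [mul_sub, sub_mul, sub_mul, one_mul, mul_one, one_mul, he.1]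
    abel
  · rw [star_sub, star_one, he.2]

lemma isCentral_one_sub {e : R} (hc : IsCentral e) : IsCentral (1 - e) := by
  intro r
  rw [sub_mul, mul_sub, one_mul, mul_one, hc r]

/-- characterization of generalized p.q.-Baer `*`-rings via annihilator equality
`r((xR)^n) = r((eR)^n)` for a central projection `e`. -/
theorem stmt6 :
    IsGenPQBaerStar R ↔
      ∀ x : R, ∃ (e : R) (n : ℕ), IsProj e ∧ IsCentral e ∧ rAnnPow x n = rAnnPow e n := by
  constructor
  · intro h x
    obtain ⟨n, e, he, hann⟩ := h x
    have hc : IsCentral e := central_of_rIdeal n he hann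
    refine ⟨1 - e, n, isProj_one_sub he hc, isCentral_one_sub hc, ?_⟩
    rw [hann, rIdeal_central hc he.1,
      rAnnPow_central (isCentral_one_sub hc) (isProj_one_sub he hc).1]
  · intro h x
    obtain ⟨e, n, he, hc, hann⟩ := h x
    refine ⟨n, 1 - e, isProj_one_sub he hc, ?_⟩
    rw [hann, rAnnPow_central hc he.1, rIdeal_central (isCentral_one_sub hc)
      (isProj_one_sub he hc).1]
    simp
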